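/- arXiv:2206.05987 — 4 statements merged into one kernel-verified Lean document; each statement's English description precedes it below -/
import Mathlib

section
/- Let A be a discrete valuation ring whose residue field F has characteristic 2, and let K be the quotient field of A. Let φ be a quadratic form over F and let φ_l be a quadratic form defined over A whose reduction modulo the maximal ideal of A is isometric to φ. If the quadratic form over K induced by φ_l is isotropic, then φ is isotropic over F. -/
/-!
Background definitions for quadratic forms over fields of characteristic 2,
following the conventions of "Isotropy of quadratic forms over function fields
in characteristic 2".  A quadratic form of dimension `n` over a commutative ring
`R` is represented by a coefficient matrix `c : ι → ι → R` (`ι` a finite index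
type), the associated quadratic map being `x ↦ ∑ i j, c i j * x i * x j`; every
quadratic form on a finite-dimensional vector space (a map satisfying
`φ(av) = a²φ(v)` whose polar form is bilinear) arises this way.
-/

open scoped BigOperators Pointwise Classical

namespace QF2

variable {R S : Type*} [CommRing R] [CommRing S] {ι κ : Type} [Fintype ι] [Fintype κ]

/-- The value at `x` of the quadratic form with coefficient matrix `c`, namely
`∑ i j, c i j * x i * x j`. -/
def eval (c : ι → ι → R) (x : ι → R) : R := ∑ i, ∑ j, c i j * x i * x j

/-- The polar form `b(x,y) = q(x+y) - q(x) - q(y)` of the quadratic form `c`. -/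
def polar (c : ι → ι → R) (x y : ι → R) : R := ∑ i, ∑ j, c i j * (x i * y j + x j * y i)

/-- A quadratic form is isotropic if it vanishes on a nonzero vector. -/
def IsIsotropic (c : ι → ι → R) : Prop := ∃ x : ι → R, x ≠ 0 ∧ eval c x = 0

/-- Anisotropic: not isotropic. -/
abbrev IsAnisotropic (c : ι → ι → R) : Prop := ¬ IsIsotropic c

/-- Base change of a quadratic form along a ring homomorphism. -/
def map (σ : R →+* S) (c : ι → ι → R) : ι → ι → S := fun i j => σ (c i j)

/-- Quasilinear (totally singular): the polar form vanishes identically. -/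
def IsQuasilinear (c : ι → ι → R) : Prop := ∀ x y : ι → R, polar c x y = 0

/-- Nondefective (quasilinear index `i_d = 0`): no nonzero vector of the radical of the
polar form is isotropic. -/
def IsNondefective (c : ι → ι → R) : Prop :=
  ∀ x : ι → R, (∀ y, polar c x y = 0) → eval c x = 0 → x = 0

/-- `d` is isometric to `c`. -/
def Isometric (c : ι → ι → R) (d : κ → κ → R) : Prop :=
  ∃ g : (κ → R) ≃ₗ[R] (ι → R), ∀ x, eval d x = eval c (g x)

/-- `D_R^*(c)`: the set of nonzero represented elements. -/
def reps (c : ι → ι → R) : Set R := {a | a ≠ 0 ∧ ∃ x : ι → R, eval c x = a}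

/-- `D_R^*(c)^m`: products of `m` nonzero represented elements. -/
def repsPow (c : ι → ι → R) (m : ℕ) : Set R :=
  {a | ∃ v : Fin m → R, (∀ k, v k ∈ reps c) ∧ a = ∏ k, v k}

/-- The multiplicative subgroup of `F^*` generated by a set `s` of nonzero elements,
realized as a subset of `F` (products of elements of `s` and their inverses). -/
def genBy {F : Type*} [Field F] (s : Set F) : Set F :=
  ↑(Submonoid.closure (s ∪ Inv.inv '' s))

/-- `⟨D_F^*(c)⟩`: the subgroup generated by the nonzero represented elements. -/
def genGroup {F : Type*} [Field F] (c : ι → ι → F) : Set F := genBy (reps c)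

/-- `⟨D_F^*(c)²⟩`. -/
def genGroup2 {F : Type*} [Field F] (c : ι → ι → F) : Set F := genBy (repsPow c 2)

/-- The scaled quadratic form `a·c`. -/
def smulQF (a : R) (c : ι → ι → R) : ι → ι → R := fun i j => a * c i j

/-- Orthogonal sum of two quadratic forms. -/
def orthSum (c : ι → ι → R) (d : κ → κ → R) : (ι ⊕ κ) → (ι ⊕ κ) → R
  | Sum.inl i, Sum.inl j => c i j
  | Sum.inr i, Sum.inr j => d i j
  | _, _ => 0

lemma eval_add (c : ι → ι → R) (x y : ι → R) :
    eval c (x + y) = eval c x + eval c y + polar c x y := by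
  unfold eval polar
  rw [← Finset.sum_add_distrib, ← Finset.sum_add_distrib]
  refine Finset.sum_congr rfl fun i _ => ?_
  rw [← Finset.sum_add_distrib, ← Finset.sum_add_distrib]
  refine Finset.sum_congr rfl fun j _ => ?_
  simp only [Pi.add_apply]; ring

lemma polar_add_left (c : ι → ι → R) (x x' y : ι → R) :
    polar c (x + x') y = polar c x y + polar c x' y := by
  unfold polar
  rw [← Finset.sum_add_distrib]
  refine Finset.sum_congr rfl fun i _ => ?_
  rw [← Finset.sum_add_distrib]
  refine Finset.sum_congr rfl fun j _ => ?_
  simp only [Pi.add_apply]; ring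

lemma polar_smul_left (c : ι → ι → R) (a : R) (x y : ι → R) :
    polar c (a • x) y = a * polar c x y := by
  unfold polar
  rw [Finset.mul_sum]
  refine Finset.sum_congr rfl fun i _ => ?_
  rw [Finset.mul_sum]
  refine Finset.sum_congr rfl fun j _ => ?_
  simp only [Pi.smul_apply, smul_eq_mul]; ring

lemma eval_smul (c : ι → ι → R) (a : R) (x : ι → R) :
    eval c (a • x) = a ^ 2 * eval c x := by
  unfold eval
  rw [Finset.mul_sum]
  refine Finset.sum_congr rfl fun i _ => ?_
  rw [Finset.mul_sum]
  refine Finset.sum_congr rfl fun j _ => ?_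
  simp only [Pi.smul_apply, smul_eq_mul]; ring

/-- The defect of a quadratic form: the submodule of isotropic vectors lying in the
radical of the polar form. -/
def defectSubmodule (c : ι → ι → R) : Submodule R (ι → R) where
  carrier := {x | (∀ y, polar c x y = 0) ∧ eval c x = 0}
  zero_mem' := by
    constructor
    · intro y; unfold polar; simp
    · unfold eval; simp
  add_mem' := by
    rintro x x' ⟨hx1, hx2⟩ ⟨hx1', hx2'⟩
    refine ⟨fun y => ?_, ?_⟩
    · rw [polar_add_left, hx1 y, hx1' y, add_zero]
    · rw [eval_add, hx2, hx2', hx1 x', add_zero, add_zero]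
  smul_mem' := by
    rintro a x ⟨hx1, hx2⟩
    refine ⟨fun y => ?_, ?_⟩
    · rw [polar_smul_left, hx1 y, mul_zero]
    · rw [eval_smul, hx2, mul_zero]

/-- The quasilinear index (defect) `i_d` of a quadratic form. -/
noncomputable def defectIndex (c : ι → ι → R) : ℕ :=
  Module.finrank R (defectSubmodule c)

/-- The total isotropy index `i_t`: the dimension of a maximal totally isotropic
subspace. -/
noncomputable def totalIndex (c : ι → ι → R) : ℕ :=
  sSup {m | ∃ W : Submodule R (ι → R), (∀ x ∈ W, eval c x = 0) ∧ Module.finrank R W = m}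

/-- The Witt index `i_W = i_t - i_d`. -/
noncomputable def wittIndex (c : ι → ι → R) : ℕ := totalIndex c - defectIndex c

variable {F : Type u} [Field F]

/-- The homogeneous quadratic polynomial `φ(X_1, …, X_n)` attached to a quadratic form. -/
noncomputable def poly (c : ι → ι → F) : MvPolynomial ι F :=
  ∑ i, ∑ j, MvPolynomial.C (c i j) * (MvPolynomial.X i * MvPolynomial.X j)

/-- The canonical map from `F` to the total fraction ring of `A/(f)`; when `f` is
irreducible, the target is the function field `F(f)`. -/
noncomputable def ffHom {A : Type*} [CommRing A] (σ : F →+* A) (f : A) :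
    F →+* FractionRing (A ⧸ Ideal.span {f}) :=
  (algebraMap (A ⧸ Ideal.span {f}) (FractionRing (A ⧸ Ideal.span {f}))).comp
    ((Ideal.Quotient.mk (Ideal.span {f})).comp σ)

/-- The canonical map from `R` into (the total fraction ring of) `R[X_i : i ∈ κ]`;
for a field this is the inclusion into the rational function field `F(X_i : i ∈ κ)`. -/
noncomputable def ratHom (κ : Type) (R : Type*) [CommRing R] :
    R →+* FractionRing (MvPolynomial κ R) :=
  (algebraMap (MvPolynomial κ R) (FractionRing (MvPolynomial κ R))).comp MvPolynomial.C

/-- The canonical map from `F` into the rational function field `F(X)`. -/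
noncomputable def ratHom1 (F : Type u) [Field F] : F →+* FractionRing (Polynomial F) :=
  (algebraMap (Polynomial F) (FractionRing (Polynomial F))).comp Polynomial.C

/-- `φ_{F(ψ)}` is isotropic, where `F(ψ)` is the function field of the quadratic form `ψ`.
When the polynomial of `ψ` is irreducible this is the quotient field of `F[X]/(ψ(X))`;
otherwise (`ψ ≅ ⟨a⟩`, `ψ ≅ ℍ`, or degenerate defective cases) `F(ψ)` is a purely
transcendental extension of `F`, over which isotropy is equivalent to isotropy over `F`. -/
def IsotropicOverFunField (c : ι → ι → F) (d : κ → κ → F) : Prop :=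
  (Irreducible (poly d) → IsIsotropic (map (ffHom MvPolynomial.C (poly d)) c)) ∧
  (¬ Irreducible (poly d) → IsIsotropic c)

/-- Stable birational equivalence of (nondefective) quadratic forms:
`φ_{F(ψ)}` and `ψ_{F(φ)}` are both isotropic. -/
def StbEquiv (c : ι → ι → F) (d : κ → κ → F) : Prop :=
  IsotropicOverFunField c d ∧ IsotropicOverFunField d c

/-- The leading coefficient of a multivariate polynomial with respect to the
lexicographic ordering on monomials. -/
noncomputable def lexLC {l : ℕ} {F : Type*} [CommSemiring F] (f : MvPolynomial (Fin l) F) : F :=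
  if h : f = 0 then 0
  else f.coeff (ofLex ((f.support.image (toLex : (Fin l →₀ ℕ) → Lex (Fin l →₀ ℕ))).max'
    (Finset.Nonempty.image (MvPolynomial.support_nonempty.mpr h) _)))

/-- The coefficient matrix of the tensor product `π ⊗ φ` of the bilinear Pfister form
`π = ⟨⟨a 1, …, a n⟩⟩_b` with the quadratic form `c` (with respect to the standard basis,
`π ⊗ φ ≅ ⊥_{S ⊆ {1,…,n}} (∏_{i ∈ S} a i) φ`). -/
def pfisterMul {n : ℕ} (a : Fin n → R) (c : ι → ι → R) :
    ((Fin n → Bool) × ι) → ((Fin n → Bool) × ι) → R :=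
  fun p q =>
    if p.1 = q.1 then (∏ i, if p.1 i then a i else 1) * c p.2 q.2 else 0

/-!
Clear denominators to get a zero of `φl` over `A`, and divide it by a coordinate of least
valuation (divisibility is total in a valuation ring): the result is a zero of `φl` with a
coordinate equal to `1`, so its reduction is a nonzero zero of the reduced form.
-/

lemma eval_map (σ : R →+* S) (c : ι → ι → R) (x : ι → R) :
    eval (map σ c) (fun i => σ (x i)) = σ (eval c x) := by
  simp only [eval, map, map_sum, map_mul]

lemma Isometric.isIsotropic {c : ι → ι → R} {d : κ → κ → R} (h : Isometric c d)
    (hd : IsIsotropic d) : IsIsotropic c := by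
  obtain ⟨g, hg⟩ := h
  obtain ⟨x, hx0, hx⟩ := hd
  exact ⟨g x, g.map_ne_zero_iff.mpr hx0, by rw [← hg, hx]⟩

lemma isIsotropic_map_of_eval_eq_zero [Nontrivial S] (σ : R →+* S) {c : ι → ι → R}
    {z : ι → R} {i : ι} (hzi : z i = 1) (hz : eval c z = 0) : IsIsotropic (map σ c) := by
  refine ⟨fun j => σ (z j), fun h0 => one_ne_zero (α := S) ?_, by rw [eval_map, hz, map_zero]⟩
  simpa [hzi] using congrFun h0 i

lemma IsIsotropic.of_map_algebraMap {A K : Type*} [CommRing A] [CommRing K] [Algebra A K]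
    [IsFractionRing A K] {c : ι → ι → A} (h : IsIsotropic (map (algebraMap A K) c)) :
    IsIsotropic c := by
  obtain ⟨x, hx0, hx⟩ := h
  obtain ⟨b, hb⟩ := IsLocalization.exist_integer_multiples_of_finite (nonZeroDivisors A) x
  choose y hy using hb
  have hyx : (fun i => algebraMap A K (y i)) = algebraMap A K b • x :=
    funext fun i => by rw [hy i, Algebra.smul_def]; rfl
  refine ⟨y, fun hy0 => hx0 ?_, IsFractionRing.injective A K ?_⟩
  · rw [hy0] at hyx
    refine ((IsLocalization.map_units K b).smul_eq_zero).mp (hyx.symm.trans ?_)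
    exact funext fun _ => map_zero _
  · rw [map_zero, ← eval_map, hyx, eval_smul, hx, mul_zero]

lemma IsIsotropic.exists_eval_eq_zero_apply_eq_one {A : Type*} [CommRing A] [IsDomain A]
    [ValuationRing A] {c : ι → ι → A} (h : IsIsotropic c) :
    ∃ z : ι → A, ∃ i, z i = 1 ∧ eval c z = 0 := by
  obtain ⟨y, hy0, hy⟩ := h
  obtain ⟨i, hi⟩ := Function.ne_iff.mp hy0
  obtain ⟨i₀, -, hmax⟩ :=
    Finset.univ.exists_max_image (fun j => Ideal.span {y j}) ⟨i, Finset.mem_univ i⟩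
  choose z hz using fun j => Ideal.span_singleton_le_span_singleton.mp (hmax j (Finset.mem_univ j))
  have hne : y i₀ ≠ 0 := fun h0 => hi (by rw [hz i, h0, zero_mul, Pi.zero_apply])
  have hyz : y = y i₀ • z := funext hz
  refine ⟨z, i₀, mul_left_cancel₀ hne (by rw [mul_one, ← hz i₀]), ?_⟩
  have : y i₀ ^ 2 * eval c z = 0 := by rw [← eval_smul, ← hyz, hy]
  exact (mul_eq_zero.mp this).resolve_left (pow_ne_zero 2 hne)

theorem stmt0_general {A : Type*} [CommRing A] [IsDomain A] [IsDiscreteValuationRing A]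
    {ι : Type} [Fintype ι]
    (φ : ι → ι → IsLocalRing.ResidueField A) (φl : ι → ι → A)
    (hred : Isometric φ (map (IsLocalRing.residue A) φl))
    (hiso : IsIsotropic (map (algebraMap A (FractionRing A)) φl)) :
    IsIsotropic φ := by
  obtain ⟨z, i, hzi, hz⟩ := (IsIsotropic.of_map_algebraMap hiso).exists_eval_eq_zero_apply_eq_one
  exact hred.isIsotropic (isIsotropic_map_of_eval_eq_zero _ hzi hz)

/-- Let `A` be a discrete valuation ring whose residue field `F` has
characteristic 2, and let `K` be the quotient field of `A`.  Let `φ` be a quadratic form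
over `F` and `φl` a quadratic form over `A` whose reduction modulo the maximal ideal of
`A` is isometric to `φ`.  If the quadratic form over `K` induced by `φl` is isotropic,
then `φ` is isotropic over `F`. -/
theorem stmt0 {A : Type*} [CommRing A] [IsDomain A] [IsDiscreteValuationRing A]
    [CharP (IsLocalRing.ResidueField A) 2]
    {ι : Type} [Fintype ι]
    (φ : ι → ι → IsLocalRing.ResidueField A) (φl : ι → ι → A)
    (hred : Isometric φ (map (IsLocalRing.residue A) φl))
    (hiso : IsIsotropic (map (algebraMap A (FractionRing A)) φl)) :
    IsIsotropic φ :=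
  stmt0_general φ φl hred hiso

end QF2
end

section
/- Let φ be a quadratic form over a field F of characteristic 2, let f ∈ F[X₁,…,X_l] be an irreducible polynomial, and suppose there exists a ∈ F^* such that af lies in the multiplicative subgroup ⟨D_{F(X₁,…,X_l)}^*(φ)⟩ of F(X₁,…,X_l)^* generated by the nonzero values represented by φ over the rational function field F(X₁,…,X_l). Then φ_{F(f)} is isotropic. -/
/-!
Background definitions for quadratic forms over fields of characteristic 2,
following the conventions of "Isotropy of quadratic forms over function fields
in characteristic 2".  A quadratic form of dimension `n` over a commutative ring
`R` is represented by a coefficient matrix `c : ι → ι → R` (`ι` a finite index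
type), the associated quadratic map being `x ↦ ∑ i j, c i j * x i * x j`; every
quadratic form on a finite-dimensional vector space (a map satisfying
`φ(av) = a²φ(v)` whose polar form is bilinear) arises this way.
-/

open scoped BigOperators Pointwise Classical

namespace QF2

variable {R S : Type*} [CommRing R] [CommRing S] {ι κ : Type} [Fintype ι] [Fintype κ]

variable {F : Type u} [Field F]

/-!
Let `v` be the `f`-adic valuation of `F(X₁,…,X_l)`. If `φ` were anisotropic over `F(f)`, every
nonzero value of `φ` over `F(X₁,…,X_l)` would have even `v`: clearing denominators and pulling
out the largest power `f ^ m` dividing all coordinates, the value becomes `f ^ (2 m)` times a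
polynomial that `f` does not divide, since otherwise reducing modulo `f` would give an isotropic
vector over `F(f)`. Then all of `⟨D^*(φ)⟩` has even `v`, whereas `v(a f) = 1`.
-/

lemma map_eval (σ : R →+* S) (c : ι → ι → R) (g : ι → R) :
    eval (map σ c) (σ ∘ g) = σ (eval c g) := by
  simp only [eval, map, map_sum, map_mul, Function.comp]

lemma eval_pow_smul (c : ι → ι → R) (p : R) (m : ℕ) (y : ι → R) :
    eval c (p ^ m • y) = p ^ (2 * m) * eval c y := by
  rw [eval_smul, ← pow_mul, mul_comm m]

section Residue

variable {A : Type*} [CommRing A] {p : A}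

/-- For `A = F[X₁,…,X_l]` and `p = f` irreducible, the map `A → F(f)`. -/
noncomputable def residueHom (p : A) : A →+* FractionRing (A ⧸ Ideal.span {p}) :=
  (algebraMap (A ⧸ Ideal.span {p}) (FractionRing (A ⧸ Ideal.span {p}))).comp
    (Ideal.Quotient.mk (Ideal.span {p}))

lemma residueHom_eq_zero_iff (x : A) : residueHom p x = 0 ↔ p ∣ x := by
  rw [residueHom, RingHom.comp_apply, IsFractionRing.to_map_eq_zero_iff,
    Ideal.Quotient.eq_zero_iff_mem, Ideal.mem_span_singleton]

lemma isIsotropic_map_residueHom_of_dvd_eval {c : ι → ι → A} {y : ι → A} {j : ι}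
    (hj : ¬ p ∣ y j) (hdvd : p ∣ eval c y) :
    IsIsotropic (map (residueHom p) c) :=
  ⟨residueHom p ∘ y, fun h => hj ((residueHom_eq_zero_iff _).mp (congrFun h j)),
    by rw [map_eval, residueHom_eq_zero_iff]; exact hdvd⟩

variable [IsDomain A] [WfDvdMonoid A]

lemma multiplicity_mul_of_ne_zero (hp : Prime p) {g h : A} (hg : g ≠ 0) (hh : h ≠ 0) :
    multiplicity p (g * h) = multiplicity p g + multiplicity p h :=
  multiplicity_mul hp (FiniteMultiplicity.of_prime_left hp (mul_ne_zero hg hh))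

lemma exists_eq_pow_smul_not_dvd (hp : Prime p) {y : ι → A} (hy : y ≠ 0) :
    ∃ (m : ℕ) (y' : ι → A), y = p ^ m • y' ∧ ∃ j, ¬ p ∣ y' j := by
  obtain ⟨i, hi⟩ := Function.ne_iff.mp hy
  obtain ⟨j, hj, hmin⟩ := (Finset.univ.filter (y · ≠ 0)).exists_min_image
    (fun i => multiplicity p (y i)) ⟨i, by simpa using hi⟩
  have hyj : y j ≠ 0 := by simpa using hj
  have hdvd : ∀ k, p ^ multiplicity p (y j) ∣ y k := fun k => by
    by_cases hk : y k = 0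
    · simp [hk]
    · exact pow_dvd_of_le_multiplicity (hmin k (by simpa using hk))
  choose y' hy' using hdvd
  refine ⟨_, y', funext hy', j, fun ⟨w, hw⟩ => ?_⟩
  refine (FiniteMultiplicity.of_prime_left hp hyj).not_pow_dvd_of_multiplicity_lt
    (Nat.lt_succ_self _) ⟨w, ?_⟩
  rw [pow_succ, mul_assoc, ← hw, ← hy']

lemma even_multiplicity_eval (hp : Prime p) {c : ι → ι → A}
    (haniso : IsAnisotropic (map (residueHom p) c))
    {y : ι → A} (hy : y ≠ 0) :
    eval c y ≠ 0 ∧ Even (multiplicity p (eval c y)) := by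
  obtain ⟨m, y', rfl, j, hj⟩ := exists_eq_pow_smul_not_dvd hp hy
  have hndvd : ¬ p ∣ eval c y' := fun h => haniso (isIsotropic_map_residueHom_of_dvd_eval hj h)
  have hne : eval c y' ≠ 0 := fun h => hndvd (h ▸ dvd_zero p)
  have hpow : p ^ (2 * m) ≠ 0 := pow_ne_zero _ hp.ne_zero
  rw [eval_pow_smul]
  refine ⟨mul_ne_zero hpow hne, ?_⟩
  rw [multiplicity_mul_of_ne_zero hp hpow hne, multiplicity_pow_self_of_prime hp, multiplicity_eq_zero.mpr hndvd, add_zero]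
  exact even_two_mul m

variable (K : Type*) [Field K] [Algebra A K]

/-- The elements of `K` of even `p`-adic order, described without a valuation on `K` as the
fractions `g / h` with `g, h ∈ A` nonzero and `v_p(g) + v_p(h)` even. -/
def evenOrderSubmonoid (hp : Prime p) : Submonoid K where
  carrier := {z | ∃ g h : A, g ≠ 0 ∧ h ≠ 0 ∧ z * algebraMap A K h = algebraMap A K g ∧
    Even (multiplicity p g + multiplicity p h)}
  one_mem' := ⟨1, 1, one_ne_zero, one_ne_zero, one_mul _, Even.add_self _⟩
  mul_mem' := by
    rintro z w ⟨g, h, hg, hh, hz, hev⟩ ⟨g', h', hg', hh', hw, hev'⟩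
    refine ⟨g * g', h * h', mul_ne_zero hg hg', mul_ne_zero hh hh', ?_, ?_⟩
    · rw [map_mul, map_mul, ← hz, ← hw]
      ring
    · rw [multiplicity_mul_of_ne_zero hp hg hg', multiplicity_mul_of_ne_zero hp hh hh',
        add_add_add_comm]
      exact hev.add hev'

variable {K} [IsFractionRing A K]

lemma inv_mem_evenOrderSubmonoid (hp : Prime p) {z : K} (hz : z ∈ evenOrderSubmonoid K hp) :
    z⁻¹ ∈ evenOrderSubmonoid K hp := by
  obtain ⟨g, h, hg, hh, he, hev⟩ := hz
  have hz0 : z ≠ 0 := by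
    rintro rfl
    exact hg (IsFractionRing.to_map_eq_zero_iff.mp (he.symm.trans (zero_mul _)))
  refine ⟨h, g, hh, hg, ?_, by rwa [add_comm]⟩
  rw [← he, inv_mul_cancel_left₀ hz0]

lemma even_multiplicity_of_algebraMap_mem (hp : Prime p) {g : A} (hg : g ≠ 0)
    (hmem : algebraMap A K g ∈ evenOrderSubmonoid K hp) : Even (multiplicity p g) := by
  obtain ⟨g', h, hg', hh, he, hev⟩ := hmem
  rw [← map_mul, (IsFractionRing.injective A K).eq_iff] at he
  rw [← he, multiplicity_mul_of_ne_zero hp hg hh, add_assoc] at hev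
  exact (Nat.even_add.mp hev).mpr (Even.add_self _)

lemma genBy_subset_evenOrderSubmonoid (hp : Prime p) {s : Set K}
    (hs : s ⊆ evenOrderSubmonoid K hp) : genBy s ⊆ evenOrderSubmonoid K hp := by
  refine Submonoid.closure_le.mpr (Set.union_subset hs ?_)
  rintro _ ⟨z, hz, rfl⟩
  exact inv_mem_evenOrderSubmonoid hp (hs hz)

lemma reps_subset_evenOrderSubmonoid (hp : Prime p) {c : ι → ι → A}
    (haniso : IsAnisotropic (map (residueHom p) c)) :
    reps (map (algebraMap A K) c) ⊆ evenOrderSubmonoid K hp := by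
  rintro z ⟨hz, x, rfl⟩
  obtain ⟨b, hb⟩ := IsLocalization.exist_integer_multiples_of_finite (nonZeroDivisors A) x
  choose y hy using hb
  have hb0 : (b : A) ≠ 0 := nonZeroDivisors.coe_ne_zero b
  have hxy : algebraMap A K ∘ y = algebraMap A K b • x := by
    funext i
    rw [Function.comp_apply, hy i, Algebra.smul_def, Pi.smul_apply, smul_eq_mul]
  have hval : algebraMap A K (eval c y) =
      algebraMap A K b ^ 2 * eval (map (algebraMap A K) c) x := by
    rw [← map_eval, hxy, eval_smul]
  have hy0 : y ≠ 0 := by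
    rintro rfl
    have hzero : algebraMap A K b ^ 2 * eval (map (algebraMap A K) c) x = 0 := by
      rw [← hval]; simp [eval]
    exact hz ((mul_eq_zero.mp hzero).resolve_left
      (pow_ne_zero 2 (IsFractionRing.to_map_eq_zero_iff.not.mpr hb0)))
  obtain ⟨hne, hev⟩ := even_multiplicity_eval hp haniso hy0
  refine ⟨eval c y, b ^ 2, hne, pow_ne_zero 2 hb0, by rw [hval, map_pow, mul_comm], ?_⟩
  rw [sq, multiplicity_mul_of_ne_zero hp hb0 hb0]
  exact hev.add (Even.add_self _)

end Residue

theorem stmt5_general {F : Type u} [Field F] {ι : Type} [Fintype ι] {l : ℕ}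
    (c : ι → ι → F) (f : MvPolynomial (Fin l) F) (hf : Irreducible f)
    (a : F) (ha : a ≠ 0)
    (hmem : algebraMap (MvPolynomial (Fin l) F) (FractionRing (MvPolynomial (Fin l) F))
        (MvPolynomial.C a * f) ∈ genGroup (map (ratHom (Fin l) F) c)) :
    IsIsotropic (map (ffHom MvPolynomial.C f) c) := by
  by_contra haniso
  have hp : Prime f := hf.prime
  have hunit : IsUnit (MvPolynomial.C a : MvPolynomial (Fin l) F) := ha.isUnit.map _
  have hev := even_multiplicity_of_algebraMap_mem hp (mul_ne_zero hunit.ne_zero hp.ne_zero)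
    (genBy_subset_evenOrderSubmonoid hp
      (reps_subset_evenOrderSubmonoid hp (c := map MvPolynomial.C c) haniso) hmem)
  rw [multiplicity_eq_of_associated_right (associated_unit_mul_left f _ hunit),
    multiplicity_self] at hev
  exact Nat.not_even_one hev

/-- Let `φ` be a quadratic form over a field `F` of characteristic 2,
`f ∈ F[X₁,…,X_l]` irreducible, and suppose there is `a ∈ F^*` with
`a·f ∈ ⟨D^*_{F(X₁,…,X_l)}(φ)⟩`.  Then `φ_{F(f)}` is isotropic. -/
theorem stmt5 {F : Type u} [Field F] [CharP F 2] {ι : Type} [Fintype ι] {l : ℕ}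
    (c : ι → ι → F) (f : MvPolynomial (Fin l) F) (hf : Irreducible f)
    (a : F) (ha : a ≠ 0)
    (hmem : algebraMap (MvPolynomial (Fin l) F) (FractionRing (MvPolynomial (Fin l) F))
        (MvPolynomial.C a * f) ∈ genGroup (map (ratHom (Fin l) F) c)) :
    IsIsotropic (map (ffHom MvPolynomial.C f) c) :=
  stmt5_general c f hf a ha hmem

end QF2
end

section
/- Let φ be a quadratic form over a field F of characteristic 2 and let f ∈ F[X₁,…,X_l] be a nonzero polynomial such that f ∈ D_{F(X₁,…,X_l)}^*(φ)^m for some m > 0, i.e. f is a product of m nonzero values represented by φ over F(X₁,…,X_l). Then the leading coefficient of f with respect to the lexicographic ordering lies in D_F^*(φ)^m. -/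
/-!
Background definitions for quadratic forms over fields of characteristic 2,
following the conventions of "Isotropy of quadratic forms over function fields
in characteristic 2".  A quadratic form of dimension `n` over a commutative ring
`R` is represented by a coefficient matrix `c : ι → ι → R` (`ι` a finite index
type), the associated quadratic map being `x ↦ ∑ i j, c i j * x i * x j`; every
quadratic form on a finite-dimensional vector space (a map satisfying
`φ(av) = a²φ(v)` whose polar form is bilinear) arises this way.
-/

open scoped BigOperators Pointwise Classical

namespace QF2

variable {R S : Type*} [CommRing R] [CommRing S] {ι κ : Type} [Fintype ι] [Fintype κ]

variable {F : Type u} [Field F]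

/-! ### Auxiliary lemmas for Statement 6 -/

section LexLC

variable {l : ℕ} {F : Type*} [Field F]

lemma exists_lexDeg (f : MvPolynomial (Fin l) F) (hf : f ≠ 0) :
    ∃ d : Fin l →₀ ℕ, d ∈ f.support ∧ (∀ e ∈ f.support, toLex e ≤ toLex d) ∧
      lexLC f = f.coeff d := by
  classical
  have hsne : (f.support.image (toLex : (Fin l →₀ ℕ) → Lex (Fin l →₀ ℕ))).Nonempty :=
    Finset.Nonempty.image (MvPolynomial.support_nonempty.mpr hf) _
  obtain ⟨e, he, hte⟩ := Finset.mem_image.mp (Finset.max'_mem _ hsne)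
  refine ⟨e, he, ?_, ?_⟩
  · intro e' he'
    have h := Finset.le_max' _ (toLex e') (Finset.mem_image_of_mem _ he')
    rwa [← hte] at h
  · unfold lexLC
    rw [dif_neg hf]
    rw [← hte]
    rfl

lemma lexLC_eq (f : MvPolynomial (Fin l) F) (hf : f ≠ 0) (d : Fin l →₀ ℕ)
    (hd : d ∈ f.support) (hmax : ∀ e ∈ f.support, toLex e ≤ toLex d) :
    lexLC f = f.coeff d := by
  obtain ⟨d', hd', hmax', hlc⟩ := exists_lexDeg f hf
  have : d' = d := toLex.injective (le_antisymm (hmax d' hd') (hmax' d hd))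
  rw [hlc, this]

lemma lexLC_ne_zero (f : MvPolynomial (Fin l) F) (hf : f ≠ 0) : lexLC f ≠ 0 := by
  obtain ⟨d, hd, _, hlc⟩ := exists_lexDeg f hf
  rw [hlc]; exact MvPolynomial.mem_support_iff.mp hd

lemma coeff_mul_of_max {p q : MvPolynomial (Fin l) F} {a b : Fin l →₀ ℕ}
    (hp : ∀ e ∈ p.support, toLex e ≤ toLex a) (hq : ∀ e ∈ q.support, toLex e ≤ toLex b) :
    (p * q).coeff (a + b) = p.coeff a * q.coeff b := by
  classical
  rw [MvPolynomial.coeff_mul]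
  refine Finset.sum_eq_single_of_mem (a, b) (Finset.HasAntidiagonal.mem_antidiagonal.mpr rfl) ?_
  · intro ab hab hne
    by_contra h
    have h1 : p.coeff ab.1 ≠ 0 := left_ne_zero_of_mul h
    have h2 : q.coeff ab.2 ≠ 0 := right_ne_zero_of_mul h
    have hle1 : toLex ab.1 ≤ toLex a := hp _ (MvPolynomial.mem_support_iff.mpr h1)
    have hle2 : toLex ab.2 ≤ toLex b := hq _ (MvPolynomial.mem_support_iff.mpr h2)
    have hsum : ab.1 + ab.2 = a + b := Finset.HasAntidiagonal.mem_antidiagonal.mp hab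
    have htl : toLex ab.1 + toLex ab.2 = toLex a + toLex b := by
      rw [← toLex_add, ← toLex_add, hsum]
    have e1 : toLex ab.1 = toLex a := by
      rcases lt_or_eq_of_le hle1 with hlt | heq
      · exact absurd htl (ne_of_lt (add_lt_add_of_lt_of_le hlt hle2))
      · exact heq
    have e2 : toLex ab.2 = toLex b := by
      rw [e1] at htl
      exact add_left_cancel htl
    exact hne (Prod.ext (toLex.injective e1) (toLex.injective e2))

lemma coeff_mul_eq_zero_of_lt {p q : MvPolynomial (Fin l) F} {a b : Fin l →₀ ℕ}
    (hp : ∀ e ∈ p.support, toLex e ≤ toLex a) (hq : ∀ e ∈ q.support, toLex e ≤ toLex b)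
    {N : Fin l →₀ ℕ} (hN : toLex a + toLex b < toLex N) :
    (p * q).coeff N = 0 := by
  classical
  rw [MvPolynomial.coeff_mul]
  refine Finset.sum_eq_zero ?_
  intro ab hab
  by_contra h
  have h1 : toLex ab.1 ≤ toLex a := hp _ (MvPolynomial.mem_support_iff.mpr (left_ne_zero_of_mul h))
  have h2 : toLex ab.2 ≤ toLex b := hq _ (MvPolynomial.mem_support_iff.mpr (right_ne_zero_of_mul h))
  have hsum : ab.1 + ab.2 = N := Finset.HasAntidiagonal.mem_antidiagonal.mp hab
  have : toLex N ≤ toLex a + toLex b := by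
    rw [← hsum, toLex_add]
    exact add_le_add h1 h2
  exact absurd (lt_of_lt_of_le hN this) (lt_irrefl _)

lemma lexLC_mul (f g : MvPolynomial (Fin l) F) : lexLC (f * g) = lexLC f * lexLC g := by
  classical
  by_cases hf : f = 0
  · simp [hf, lexLC]
  by_cases hg : g = 0
  · simp [hg, lexLC]
  obtain ⟨df, hdf, hmaxf, hlcf⟩ := exists_lexDeg f hf
  obtain ⟨dg, hdg, hmaxg, hlcg⟩ := exists_lexDeg g hg
  have hco : (f * g).coeff (df + dg) = f.coeff df * g.coeff dg := coeff_mul_of_max hmaxf hmaxg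
  have hne0 : f.coeff df * g.coeff dg ≠ 0 :=
    mul_ne_zero (MvPolynomial.mem_support_iff.mp hdf) (MvPolynomial.mem_support_iff.mp hdg)
  have hfg : f * g ≠ 0 := by
    intro h
    rw [h, MvPolynomial.coeff_zero] at hco
    exact hne0 hco.symm
  have hmem : df + dg ∈ (f * g).support := MvPolynomial.mem_support_iff.mpr (hco ▸ hne0)
  have hmax : ∀ e ∈ (f * g).support, toLex e ≤ toLex (df + dg) := by
    intro e he
    obtain ⟨x, hx, y, hy, hxy⟩ := Finset.mem_add.mp (MvPolynomial.support_mul f g he)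
    rw [← hxy, toLex_add, toLex_add]
    exact add_le_add (hmaxf x hx) (hmaxg y hy)
  rw [lexLC_eq (f * g) hfg _ hmem hmax, hco, hlcf, hlcg]

lemma lexLC_one : lexLC (1 : MvPolynomial (Fin l) F) = 1 := by
  classical
  have h1 : (1 : MvPolynomial (Fin l) F) ≠ 0 := one_ne_zero
  have h0 : (0 : Fin l →₀ ℕ) ∈ (1 : MvPolynomial (Fin l) F).support := by
    rw [MvPolynomial.mem_support_iff]
    simp
  rw [lexLC_eq 1 h1 0 h0 ?_]
  · simp
  · intro e he
    have h1 : e ∈ ((MvPolynomial.monomial (0 : Fin l →₀ ℕ)) (1 : F)).support := by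
      simpa [MvPolynomial.monomial_zero'] using he
    have : e = 0 := Finset.mem_singleton.mp (MvPolynomial.support_monomial_subset h1)
    rw [this]

/-- `lexLC` as a monoid homomorphism. -/
noncomputable def lexLCHom : MvPolynomial (Fin l) F →* F where
  toFun := lexLC
  map_one' := lexLC_one
  map_mul' := lexLC_mul

@[simp] lemma lexLCHom_apply (f : MvPolynomial (Fin l) F) : lexLCHom f = lexLC f := rfl

end LexLC
section EvalAux

variable {R S : Type*} [CommRing R] [CommRing S] {ι : Type} [Fintype ι]

lemma eval_ringHom (τ : R →+* S) (c : ι → ι → R) (x : ι → R) :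
    eval (map τ c) (fun i => τ (x i)) = τ (eval c x) := by
  unfold eval map
  simp [map_sum, map_mul]

lemma polar_comm (c : ι → ι → R) (x y : ι → R) : polar c x y = polar c y x := by
  unfold polar
  refine Finset.sum_congr rfl fun i _ => Finset.sum_congr rfl fun j _ => ?_
  ring

lemma polar_smul_right (c : ι → ι → R) (a : R) (x y : ι → R) :
    polar c x (a • y) = a * polar c x y := by
  rw [polar_comm, polar_smul_left, polar_comm]

lemma eval_zero (c : ι → ι → R) : eval c (0 : ι → R) = 0 := by
  unfold eval; simp

end EvalAux

section KeyLemma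

variable {F : Type u} [Field F] {l : ℕ} {ι : Type} [Fintype ι]

lemma coeff_eval (c : ι → ι → F) (w : ι → MvPolynomial (Fin l) F) (N : Fin l →₀ ℕ) :
    (eval (map MvPolynomial.C c) w).coeff N = ∑ i, ∑ j, c i j * (w i * w j).coeff N := by
  unfold eval map
  rw [MvPolynomial.coeff_sum]
  refine Finset.sum_congr rfl fun i _ => ?_
  rw [MvPolynomial.coeff_sum]
  refine Finset.sum_congr rfl fun j _ => ?_
  rw [mul_assoc, MvPolynomial.coeff_C_mul]

lemma polar_radical_zero (c : ι → ι → F) (z : ι → F)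
    (hz : ∀ y, polar c z y = 0) (v : ι → MvPolynomial (Fin l) F) :
    polar (map MvPolynomial.C c) v (fun i => MvPolynomial.C (z i)) = 0 := by
  apply MvPolynomial.ext
  intro N
  rw [MvPolynomial.coeff_zero]
  have hco : (polar (map MvPolynomial.C c) v (fun i => MvPolynomial.C (z i))).coeff N
      = polar c (fun i => (v i).coeff N) z := by
    unfold polar map
    rw [MvPolynomial.coeff_sum]
    refine Finset.sum_congr rfl fun i _ => ?_
    rw [MvPolynomial.coeff_sum]
    refine Finset.sum_congr rfl fun j _ => ?_
    simp only [MvPolynomial.coeff_C_mul, MvPolynomial.coeff_add]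
    rw [mul_comm (v i), mul_comm (v j), MvPolynomial.coeff_C_mul, MvPolynomial.coeff_C_mul]
    ring
  rw [hco, polar_comm, hz]

lemma key_lemma (c : ι → ι → F)
    (hB : ∀ x : ι → F, eval c x = 0 → ∀ y : ι → F, polar c x y = 0) :
    ∀ n : ℕ, ∀ w : ι → MvPolynomial (Fin l) F, (∑ i, (w i).support.card) ≤ n →
      eval (map MvPolynomial.C c) w ≠ 0 →
      ∃ z : ι → F, eval c z ≠ 0 ∧ eval c z = lexLC (eval (map MvPolynomial.C c) w) := by
  classical
  intro n
  induction n with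
  | zero =>
    intro w hcard hg
    exfalso
    apply hg
    have hw : ∀ i, w i = 0 := by
      intro i
      have h0 : (w i).support.card = 0 := by
        have := Finset.sum_eq_zero_iff.mp (Nat.le_zero.mp hcard)
        exact this i (Finset.mem_univ i)
      rw [← MvPolynomial.support_eq_empty, ← Finset.card_eq_zero]
      exact h0
    unfold eval
    refine Finset.sum_eq_zero fun i _ => Finset.sum_eq_zero fun j _ => ?_
    rw [hw i, mul_zero, zero_mul]
  | succ n IH =>
    intro w hcard hg
    set g := eval (map MvPolynomial.C c) w with hgdef
    -- some w i is nonzero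
    have hwne : ∃ i, w i ≠ 0 := by
      by_contra h
      push_neg at h
      apply hg
      rw [hgdef]
      unfold eval
      refine Finset.sum_eq_zero fun i _ => Finset.sum_eq_zero fun j _ => ?_
      rw [h i, mul_zero, zero_mul]
    set S : Finset (Fin l →₀ ℕ) := Finset.univ.biUnion (fun i => (w i).support) with hSdef
    have hSne : S.Nonempty := by
      obtain ⟨i, hi⟩ := hwne
      obtain ⟨e, he⟩ := MvPolynomial.support_nonempty.mpr hi
      exact ⟨e, Finset.mem_biUnion.mpr ⟨i, Finset.mem_univ i, he⟩⟩
    have hSine : (S.image (toLex : (Fin l →₀ ℕ) → Lex (Fin l →₀ ℕ))).Nonempty :=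
      Finset.Nonempty.image hSne _
    obtain ⟨M, hMS, hMmax'⟩ : ∃ M : Fin l →₀ ℕ, M ∈ S ∧
        ∀ e ∈ S, toLex e ≤ toLex M := by
      obtain ⟨e, he, hte⟩ := Finset.mem_image.mp (Finset.max'_mem _ hSine)
      refine ⟨e, he, fun e' he' => ?_⟩
      have h := Finset.le_max' _ (toLex e') (Finset.mem_image_of_mem _ he')
      rwa [← hte] at h
    have hMmax : ∀ i, ∀ e ∈ (w i).support, toLex e ≤ toLex M := fun i e he =>
      hMmax' e (Finset.mem_biUnion.mpr ⟨i, Finset.mem_univ i, he⟩)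
    obtain ⟨i0, _, hMi0⟩ := Finset.mem_biUnion.mp hMS
    set z : ι → F := fun i => (w i).coeff M with hzdef
    -- Claim A
    have claimA : ∀ N : Fin l →₀ ℕ, toLex (M + M) < toLex N → g.coeff N = 0 := by
      intro N hN
      rw [hgdef, coeff_eval]
      refine Finset.sum_eq_zero fun i _ => Finset.sum_eq_zero fun j _ => ?_
      rw [coeff_mul_eq_zero_of_lt (hMmax i) (hMmax j) (by rwa [toLex_add] at hN), mul_zero]
    -- Claim B
    have claimB : g.coeff (M + M) = eval c z := by
      rw [hgdef, coeff_eval]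
      unfold eval
      refine Finset.sum_congr rfl fun i _ => Finset.sum_congr rfl fun j _ => ?_
      rw [coeff_mul_of_max (hMmax i) (hMmax j), mul_assoc]
    by_cases hez : eval c z = 0
    · -- descent
      set u : ι → MvPolynomial (Fin l) F := fun i => MvPolynomial.monomial M (z i) with hudef
      set w' : ι → MvPolynomial (Fin l) F := fun i => w i - u i with hw'def
      have hcoeffM : ∀ i, (w' i).coeff M = 0 := by
        intro i
        simp [hw'def, hudef, MvPolynomial.coeff_monomial, hzdef]
      have hcoeffN : ∀ i, ∀ N, N ≠ M → (w' i).coeff N = (w i).coeff N := by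
        intro i N hN
        simp [hw'def, hudef, MvPolynomial.coeff_monomial, Ne.symm hN]
      have hsub : ∀ i, (w' i).support ⊆ (w i).support.erase M := by
        intro i N hN
        have hN0 := MvPolynomial.mem_support_iff.mp hN
        have hNM : N ≠ M := by
          intro h; rw [h] at hN0; exact hN0 (hcoeffM i)
        refine Finset.mem_erase.mpr ⟨hNM, MvPolynomial.mem_support_iff.mpr ?_⟩
        rwa [hcoeffN i N hNM] at hN0
      have hcard' : (∑ i, (w' i).support.card) ≤ n := by
        have hlt : (∑ i, (w' i).support.card) < ∑ i, (w i).support.card := by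
          refine Finset.sum_lt_sum (fun i _ => ?_) ⟨i0, Finset.mem_univ i0, ?_⟩
          · exact le_trans (Finset.card_le_card (hsub i))
              (Finset.card_le_card (Finset.erase_subset _ _))
          · calc (w' i0).support.card ≤ ((w i0).support.erase M).card :=
                  Finset.card_le_card (hsub i0)
              _ < (w i0).support.card := Finset.card_erase_lt_of_mem hMi0
        exact Nat.lt_succ_iff.mp (lt_of_lt_of_le hlt hcard)
      have heval : eval (map MvPolynomial.C c) w' = g := by
        have hw : w = w' + u := by
          funext i
          simp [hw'def]
        have heu : eval (map MvPolynomial.C c) u = 0 := by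
          have : eval (map MvPolynomial.C c) u
              = MvPolynomial.monomial (M + M) (eval c z) := by
            unfold eval map
            rw [map_sum]
            refine Finset.sum_congr rfl fun i _ => ?_
            rw [map_sum]
            refine Finset.sum_congr rfl fun j _ => ?_
            rw [hudef]
            simp only
            rw [MvPolynomial.C_mul_monomial, MvPolynomial.monomial_mul, mul_assoc]
          rw [this, hez, map_zero]
        have hpu : polar (map MvPolynomial.C c) w' u = 0 := by
          have hu : u = (MvPolynomial.monomial M (1 : F)) • (fun i => MvPolynomial.C (z i)) := by
            funext i
            simp only [Pi.smul_apply, smul_eq_mul, hudef]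
            rw [mul_comm, MvPolynomial.C_mul_monomial, mul_one]
          rw [hu, polar_smul_right, polar_radical_zero c z (hB z hez), mul_zero]
        rw [hgdef, hw, eval_add, heu, hpu, add_zero, add_zero]
      obtain ⟨z', hz'0, hz'⟩ := IH w' hcard' (heval ▸ hg)
      exact ⟨z', hz'0, by rwa [heval] at hz'⟩
    · -- leading coefficient case
      refine ⟨z, hez, ?_⟩
      have hmem : M + M ∈ g.support := MvPolynomial.mem_support_iff.mpr (claimB ▸ hez)
      have hmax : ∀ e ∈ g.support, toLex e ≤ toLex (M + M) := by
        intro e he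
        by_contra h
        exact MvPolynomial.mem_support_iff.mp he (claimA e (lt_of_not_ge h))
      rw [lexLC_eq g hg _ hmem hmax, claimB]

end KeyLemma
/-- Let `φ` be a quadratic form over a field `F` of characteristic 2
and `f ∈ F[X₁,…,X_l]` a nonzero polynomial with `f ∈ D^*_{F(X₁,…,X_l)}(φ)^m` for some
`m > 0`.  Then the leading coefficient of `f` with respect to the lexicographic
ordering lies in `D_F^*(φ)^m`. -/
theorem stmt6 {F : Type u} [Field F] [CharP F 2] {ι : Type} [Fintype ι] {l : ℕ}
    (c : ι → ι → F) (f : MvPolynomial (Fin l) F) (hf : f ≠ 0) (m : ℕ) (hm : 0 < m)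
    (hmem : algebraMap (MvPolynomial (Fin l) F) (FractionRing (MvPolynomial (Fin l) F)) f
        ∈ repsPow (map (ratHom (Fin l) F) c) m) :
    lexLC f ∈ repsPow c m := by
  classical
  obtain ⟨v, hv, hprod⟩ := hmem
  set k0 : Fin m := ⟨0, hm⟩ with hk0
  by_cases hB : ∀ x : ι → F, eval c x = 0 → ∀ y : ι → F, polar c x y = 0
  · -- main case: every isotropic vector lies in the radical
    have hinj : Function.Injective
        (algebraMap (MvPolynomial (Fin l) F) (FractionRing (MvPolynomial (Fin l) F))) :=
      IsFractionRing.injective _ _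
    have step : ∀ k : Fin m, ∃ (g d : MvPolynomial (Fin l) F) (z : ι → F),
        d ≠ 0 ∧ algebraMap (MvPolynomial (Fin l) F) (FractionRing (MvPolynomial (Fin l) F)) g
          = (algebraMap (MvPolynomial (Fin l) F) (FractionRing (MvPolynomial (Fin l) F)) d) ^ 2
              * v k ∧
        eval c z ≠ 0 ∧ eval c z = lexLC g := by
      intro k
      obtain ⟨hvk0, x, hx⟩ := hv k
      obtain ⟨b, hb⟩ := IsLocalization.exist_integer_multiples
        (nonZeroDivisors (MvPolynomial (Fin l) F)) Finset.univ x
      choose w hw using fun i => hb i (Finset.mem_univ i)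
      have hd0 : (b : MvPolynomial (Fin l) F) ≠ 0 := nonZeroDivisors.ne_zero b.2
      have hσd : algebraMap (MvPolynomial (Fin l) F) (FractionRing (MvPolynomial (Fin l) F))
          (b : MvPolynomial (Fin l) F) ≠ 0 := fun h => hd0 (hinj (by rw [h, map_zero]))
      have hσg : algebraMap (MvPolynomial (Fin l) F) (FractionRing (MvPolynomial (Fin l) F))
            (eval (map MvPolynomial.C c) w)
          = (algebraMap (MvPolynomial (Fin l) F) (FractionRing (MvPolynomial (Fin l) F))
              (b : MvPolynomial (Fin l) F)) ^ 2 * v k := by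
        have h1 := (eval_ringHom
          (algebraMap (MvPolynomial (Fin l) F) (FractionRing (MvPolynomial (Fin l) F)))
          (map MvPolynomial.C c) w).symm
        rw [h1]
        have h2 : (fun i => algebraMap (MvPolynomial (Fin l) F)
              (FractionRing (MvPolynomial (Fin l) F)) (w i))
            = (algebraMap (MvPolynomial (Fin l) F) (FractionRing (MvPolynomial (Fin l) F))
                (b : MvPolynomial (Fin l) F)) • x := by
          funext i
          rw [hw i, Algebra.smul_def]
          rfl
        have hx' : eval (map (algebraMap (MvPolynomial (Fin l) F)
            (FractionRing (MvPolynomial (Fin l) F))) (map MvPolynomial.C c)) x = v k := hx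
        rw [h2, eval_smul, hx']
      have hg0 : eval (map MvPolynomial.C c) w ≠ 0 := by
        intro h
        rw [h, map_zero] at hσg
        exact mul_ne_zero (pow_ne_zero 2 hσd) hvk0 hσg.symm
      obtain ⟨z, hz0, hzeq⟩ := key_lemma c hB (∑ i, (w i).support.card) w le_rfl hg0
      exact ⟨eval (map MvPolynomial.C c) w, (b : MvPolynomial (Fin l) F), z,
        hd0, hσg, hz0, hzeq⟩
    choose g d z hd hgd hz0 hzlc using step
    have hprodg : (∏ k, g k) = (∏ k, d k) ^ 2 * f := by
      apply hinj
      rw [map_mul, map_pow, map_prod, map_prod]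
      rw [Finset.prod_congr rfl (fun k _ => hgd k), Finset.prod_mul_distrib, ← hprod,
        Finset.prod_pow]
    have hdprod0 : (∏ k, d k) ≠ 0 := Finset.prod_ne_zero_iff.mpr fun k _ => hd k
    set L : F := lexLC (∏ k, d k) with hL
    have hL0 : L ≠ 0 := lexLC_ne_zero _ hdprod0
    have hlcprod : (∏ k, lexLC (g k)) = L ^ 2 * lexLC f := by
      calc (∏ k, lexLC (g k)) = lexLC (∏ k, g k) := by
            rw [← lexLCHom_apply (∏ k, g k), map_prod]
            rfl
        _ = L ^ 2 * lexLC f := by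
            rw [hprodg, ← lexLCHom_apply, map_mul, map_pow]
            rfl
    have hz_prod : (∏ k, eval c (z k)) = L ^ 2 * lexLC f := by
      rw [Finset.prod_congr rfl (fun k _ => hzlc k)]
      exact hlcprod
    refine ⟨fun k => if k = k0 then (L⁻¹) ^ 2 * eval c (z k0) else eval c (z k), ?_, ?_⟩
    · intro k
      show (if k = k0 then (L⁻¹) ^ 2 * eval c (z k0) else eval c (z k)) ∈ reps c
      by_cases hk : k = k0
      · rw [if_pos hk]
        refine ⟨mul_ne_zero (pow_ne_zero 2 (inv_ne_zero hL0)) (hz0 k0), L⁻¹ • z k0, ?_⟩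
        rw [eval_smul]
      · rw [if_neg hk]
        exact ⟨hz0 k, z k, rfl⟩
    · have hsplit : (∏ k, (if k = k0 then (L⁻¹) ^ 2 * eval c (z k0) else eval c (z k)))
          = (L⁻¹) ^ 2 * ∏ k, eval c (z k) := by
        rw [← Finset.mul_prod_erase Finset.univ
            (fun k => if k = k0 then (L⁻¹) ^ 2 * eval c (z k0) else eval c (z k))
            (Finset.mem_univ k0)]
        rw [if_pos rfl]
        rw [Finset.prod_congr rfl (fun k hk => if_neg (Finset.ne_of_mem_erase hk))]
        rw [mul_assoc, Finset.mul_prod_erase Finset.univ (fun k => eval c (z k))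
            (Finset.mem_univ k0)]
      rw [hsplit, hz_prod, ← mul_assoc, inv_pow, inv_mul_cancel₀ (pow_ne_zero 2 hL0), one_mul]
  · -- φ is universal over F
    push_neg at hB
    obtain ⟨x, hx0, y, hxy⟩ := hB
    have huniv : ∀ a : F, ∃ w : ι → F, eval c w = a := by
      intro a
      refine ⟨((a - eval c y) / polar c x y) • x + y, ?_⟩
      rw [eval_add, eval_smul, hx0, polar_smul_left, mul_zero, zero_add,
        div_mul_cancel₀ _ hxy]
      ring
    refine ⟨fun k => if k = k0 then lexLC f else 1, ?_, ?_⟩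
    · intro k
      show (if k = k0 then lexLC f else 1) ∈ reps c
      by_cases hk : k = k0
      · rw [if_pos hk]
        exact ⟨lexLC_ne_zero f hf, huniv _⟩
      · rw [if_neg hk]
        exact ⟨one_ne_zero, huniv 1⟩
    · rw [← Finset.mul_prod_erase Finset.univ
          (fun k => if k = k0 then lexLC f else 1) (Finset.mem_univ k0)]
      rw [if_pos rfl]
      rw [Finset.prod_congr rfl (fun k hk => if_neg (Finset.ne_of_mem_erase hk))]
      rw [Finset.prod_const_one, mul_one]

end QF2
end

section
/- Let F be a field of characteristic 2, φ a nondefective quadratic form over F with 1 ∈ D_F^*(φ), and f ∈ F[X] a monic irreducible polynomial in one variable. Then the following are equivalent: (i) f ∈ D_{F(X)}^*(φ)^m for some m ≤ deg f; (ii) φ_{F(f)} is isotropic. -/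
/-!
Background definitions for quadratic forms over fields of characteristic 2,
following the conventions of "Isotropy of quadratic forms over function fields
in characteristic 2".  A quadratic form of dimension `n` over a commutative ring
`R` is represented by a coefficient matrix `c : ι → ι → R` (`ι` a finite index
type), the associated quadratic map being `x ↦ ∑ i j, c i j * x i * x j`; every
quadratic form on a finite-dimensional vector space (a map satisfying
`φ(av) = a²φ(v)` whose polar form is bilinear) arises this way.
-/

open scoped BigOperators Pointwise Classical

namespace QF2

variable {R S : Type*} [CommRing R] [CommRing S] {ι κ : Type} [Fintype ι] [Fintype κ]

variable {F : Type u} [Field F]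

/-!
If `φ` is isotropic over `F` it is universal (being nondefective), so `f` itself is a value of
`φ_{F(X)}`. Otherwise everything happens in `F[X]`: `φ_{F(f)}` is isotropic iff `f ∣ φ(z)` for
some polynomial vector `z` not divisible by `f`.

Take such a `z` with `φ(z)` of minimal degree. Then `deg z_i < deg f`, and as `φ` is anisotropic,
`deg φ(z) = 2 max deg z_i` with leading coefficient a value of `φ`; so `φ(z) = f g` with
`deg g ≤ deg f - 2`. By minimality, each monic irreducible factor of `g` divides `φ(z)` but not
all `z_i`, so by induction on the degree it is a product of at most its degree many values, and
`f = φ(z) · g · (g⁻¹)²` is a product of at most `2 + deg g ≤ deg f` values.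

Conversely, clearing denominators in `f = ∏ φ(x_k)` gives `f u² = ∏ φ(y_k)` over `F[X]`; if `φ`
had no such zero modulo `f`, every value `φ(y)` would have even `f`-adic order, contradicting the
odd order of `f u²`.
-/

section CommRing

variable {A B : Type*} [CommRing A] [CommRing B] {ι : Type} [Fintype ι]

theorem eval_map_comp (σ : A →+* B) (c : ι → ι → A) (x : ι → A) :
    eval (map σ c) (fun i => σ (x i)) = σ (eval c x) := by
  simp [eval, map, map_sum, map_mul]

theorem polar_map_comp (σ : A →+* B) (c : ι → ι → A) (x y : ι → A) :
    polar (map σ c) (fun i => σ (x i)) (fun i => σ (y i)) = σ (polar c x y) := by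
  simp [polar, map, map_sum, map_mul, map_add]

theorem dvd_eval_sub_eval (c : ι → ι → A) {g : A} {y z : ι → A} (h : ∀ i, g ∣ y i - z i) :
    g ∣ eval c y - eval c z := by
  have hmk : ∀ x : ι → A, Ideal.Quotient.mk (Ideal.span {g}) (eval c x) =
      eval (map (Ideal.Quotient.mk _) c) fun i => Ideal.Quotient.mk (Ideal.span {g}) (x i) :=
    fun x => (eval_map_comp _ c x).symm
  rw [← Ideal.mem_span_singleton, ← Ideal.Quotient.eq, hmk, hmk]
  congr 1
  funext i
  exact Ideal.Quotient.eq.2 (Ideal.mem_span_singleton.2 (h i))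

theorem eval_eq_sq_mul_of_map_eq_mul (σ : A →+* B) (c : ι → ι → A) {d : A} {x : ι → B}
    {y : ι → A} (hy : ∀ i, σ (y i) = σ d * x i) :
    σ (eval c y) = σ d ^ 2 * eval (map σ c) x := by
  rw [← eval_map_comp, ← eval_smul]
  congr 1
  funext i
  simp [hy i]

def IsNontrivialZeroMod (c : ι → ι → A) (f : A) (z : ι → A) : Prop :=
  (∃ i, ¬ f ∣ z i) ∧ f ∣ eval c z

theorem isIsotropic_map_quotient_iff (c : ι → ι → A) (f : A) :
    IsIsotropic (map (Ideal.Quotient.mk (Ideal.span {f})) c) ↔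
      ∃ z, IsNontrivialZeroMod c f z := by
  simp only [IsNontrivialZeroMod, ← Ideal.mem_span_singleton, ← Ideal.Quotient.eq_zero_iff_mem]
  constructor
  · rintro ⟨x, hx0, hx⟩
    obtain ⟨z, rfl⟩ := (Ideal.Quotient.mk_surjective (I := Ideal.span {f})).comp_left x
    refine ⟨z, ?_, by rwa [← eval_map_comp]⟩
    simpa [funext_iff] using hx0
  · rintro ⟨z, ⟨i, hi⟩, hz⟩
    exact ⟨_, fun h => hi (congrFun h i), by rwa [eval_map_comp]⟩

end CommRing

section FractionRing

variable {A K : Type*} [CommRing A] [IsDomain A] [Field K] [Algebra A K] [IsFractionRing A K]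
  {ι : Type} [Fintype ι]

theorem exists_algebraMap_eq_mul (x : ι → K) :
    ∃ d : A, d ≠ 0 ∧ ∃ y : ι → A, ∀ i, algebraMap A K (y i) = algebraMap A K d * x i := by
  obtain ⟨⟨d, hd⟩, hint⟩ := IsLocalization.exist_integer_multiples_of_finite (nonZeroDivisors A) x
  choose y hy using hint
  exact ⟨d, nonZeroDivisors.ne_zero hd, y, fun i => by simp [hy i, Algebra.smul_def]⟩

theorem isIsotropic_map_algebraMap_iff (c : ι → ι → A) :
    IsIsotropic (map (algebraMap A K) c) ↔ IsIsotropic c := by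
  have hinj := IsFractionRing.injective A K
  constructor
  · rintro ⟨x, hx0, hx⟩
    obtain ⟨d, hd, y, hy⟩ := exists_algebraMap_eq_mul (A := A) x
    refine ⟨y, fun h => hx0 (funext fun i => ?_), hinj ?_⟩
    · have hi := hy i
      rw [h, Pi.zero_apply, map_zero, eq_comm, mul_eq_zero] at hi
      exact hi.resolve_left ((map_ne_zero_iff _ hinj).2 hd)
    · rw [eval_eq_sq_mul_of_map_eq_mul _ c hy, hx, mul_zero, map_zero]
  · rintro ⟨x, hx0, hx⟩
    refine ⟨fun i => algebraMap A K (x i), fun h => hx0 ?_, by rw [eval_map_comp, hx, map_zero]⟩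
    funext i
    exact hinj (by simpa using congrFun h i)

end FractionRing

theorem isIsotropic_map_ffHom_iff {A : Type*} [CommRing A] {ι : Type} [Fintype ι] (σ : F →+* A)
    {f : A} (hf : Prime f) (c : ι → ι → F) :
    IsIsotropic (map (ffHom σ f) c) ↔ ∃ z, IsNontrivialZeroMod (map σ c) f z := by
  have : (Ideal.span {f}).IsPrime := (Ideal.span_singleton_prime hf.ne_zero).mpr hf
  exact (isIsotropic_map_algebraMap_iff (K := FractionRing (A ⧸ Ideal.span {f}))
    (map (Ideal.Quotient.mk (Ideal.span {f})) (map σ c))).trans (isIsotropic_map_quotient_iff _ f)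

section Field

variable {K : Type*} [Field K] {ι : Type} [Fintype ι]

/-- An isotropic vector `x` pairs nontrivially with some `w`, and then `t • x + w` takes
every value as `t` varies. -/
theorem mem_reps_map_of_isIsotropic {c : ι → ι → F} (hnd : IsNondefective c)
    (hiso : IsIsotropic c) (σ : F →+* K) {a : K} (ha : a ≠ 0) : a ∈ reps (map σ c) := by
  obtain ⟨x, hx0, hx⟩ := hiso
  obtain ⟨w, hw⟩ : ∃ w, polar c x w ≠ 0 := by
    by_contra! h
    exact hx0 (hnd x h hx)
  have hb : σ (polar c x w) ≠ 0 := (map_ne_zero σ).mpr hw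
  refine ⟨ha, ((a - eval (map σ c) (fun i => σ (w i))) / σ (polar c x w)) • (fun i => σ (x i)) +
    fun i => σ (w i), ?_⟩
  rw [eval_add, eval_smul, polar_smul_left, eval_map_comp σ c x, eval_map_comp, polar_map_comp,
    hx, map_zero]
  field_simp
  ring

theorem map_mem_reps_map (σ : F →+* K) {c : ι → ι → F} {a : F} (ha : a ∈ reps c) :
    σ a ∈ reps (map σ c) := by
  obtain ⟨ha0, x, rfl⟩ := ha
  exact ⟨(map_ne_zero σ).mpr ha0, _, eval_map_comp σ c x⟩

theorem ne_zero_of_mem_repsPow {c : ι → ι → K} {a : K} {m : ℕ} (ha : a ∈ repsPow c m) :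
    a ≠ 0 := by
  obtain ⟨v, hv, rfl⟩ := ha
  exact Finset.prod_ne_zero_iff.mpr fun k _ => (hv k).1

theorem mem_repsPow_one {c : ι → ι → K} {a : K} (ha : a ∈ reps c) : a ∈ repsPow c 1 :=
  ⟨fun _ => a, fun _ => ha, by simp⟩

theorem mul_mem_repsPow_add {c : ι → ι → K} {a b : K} {m n : ℕ}
    (ha : a ∈ repsPow c m) (hb : b ∈ repsPow c n) : a * b ∈ repsPow c (m + n) := by
  obtain ⟨v, hv, rfl⟩ := ha
  obtain ⟨w, hw, rfl⟩ := hb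
  refine ⟨Fin.append v w, Fin.addCases (by simpa using hv) (by simpa using hw), ?_⟩
  simp [Fin.prod_univ_add]

theorem sq_mul_mem_reps {c : ι → ι → K} {a : K} (ha : a ∈ reps c) {s : K} (hs : s ≠ 0) :
    s ^ 2 * a ∈ reps c := by
  obtain ⟨ha0, x, hx⟩ := ha
  exact ⟨mul_ne_zero (pow_ne_zero 2 hs) ha0, s • x, by rw [eval_smul, hx]⟩

/-- `a = (b⁻¹)² · (a b) · b`. -/
theorem mem_repsPow_succ_of_mul_mem_reps {c : ι → ι → K} {a b : K} {m : ℕ}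
    (hab : a * b ∈ reps c) (hb : b ∈ repsPow c m) : a ∈ repsPow c (1 + m) := by
  have hb0 := ne_zero_of_mem_repsPow hb
  have h := mul_mem_repsPow_add (mem_repsPow_one (sq_mul_mem_reps hab (inv_ne_zero hb0))) hb
  convert h using 1
  field_simp

end Field

/-- A prime-adic order argument: every element of `S` has even `p`-adic order, while `p * u ^ 2`
has odd order. -/
theorem prime_mul_sq_ne_multiset_prod {A : Type*} [CommRing A] [IsDomain A] [WfDvdMonoid A]
    {p : A} (hp : Prime p) {S : Set A} (hS : ∀ s ∈ S, p ∣ s → ∃ t ∈ S, s = p ^ 2 * t)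
    {u : A} (hu : u ≠ 0) (s : Multiset A) (hs : ∀ x ∈ s, x ∈ S) : p * u ^ 2 ≠ s.prod := by
  induction u using (wellFounded_dvdNotUnit (α := A)).induction generalizing s with
  | _ u ih =>
    intro heq
    obtain ⟨x, hx, hpx⟩ := hp.exists_mem_multiset_dvd (heq ▸ dvd_mul_right p _)
    obtain ⟨t, ht, rfl⟩ := hS x (hs x hx) hpx
    obtain ⟨r, rfl⟩ := Multiset.exists_cons_of_mem hx
    have hu2 : u ^ 2 = p * (t * r.prod) := by
      refine mul_left_cancel₀ hp.ne_zero ?_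
      rw [heq, Multiset.prod_cons]
      ring
    obtain ⟨u₁, rfl⟩ := hp.dvd_of_dvd_pow (Dvd.intro _ hu2.symm)
    have hu₁ : u₁ ≠ 0 := right_ne_zero_of_mul hu
    refine ih u₁ ⟨hu₁, p, hp.not_isUnit, mul_comm _ _⟩ hu₁ (t ::ₘ r) ?_ ?_
    · intro y hy
      rcases Multiset.mem_cons.mp hy with rfl | hy
      · exact ht
      · exact hs y (Multiset.mem_cons_of_mem hy)
    · refine mul_left_cancel₀ (pow_ne_zero 2 hp.ne_zero) ?_
      rw [Multiset.prod_cons] at heq ⊢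
      linear_combination heq

section Descent

variable {A : Type*} [CommRing A] {ι : Type} [Fintype ι]

theorem exists_eval_eq_sq_mul_of_dvd {c : ι → ι → A} {f : A}
    (h : ¬ ∃ z, IsNontrivialZeroMod c f z) {y : ι → A} (hy : f ∣ eval c y) :
    ∃ y', eval c y = f ^ 2 * eval c y' := by
  have hdvd : ∀ i, f ∣ y i := by
    by_contra! ⟨i, hi⟩
    exact h ⟨y, ⟨i, hi⟩, hy⟩
  choose y' hy' using hdvd
  refine ⟨y', ?_⟩
  rw [← eval_smul]
  congr 1
  funext i
  simp [hy' i]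

theorem exists_isNontrivialZeroMod_of_mem_repsPow [IsDomain A] [WfDvdMonoid A] {K : Type*}
    [Field K] [Algebra A K] [IsFractionRing A K] {c : ι → ι → A} {f : A} (hf : Prime f) {m : ℕ}
    (h : algebraMap A K f ∈ repsPow (map (algebraMap A K) c) m) :
    ∃ z, IsNontrivialZeroMod c f z := by
  by_contra hno
  obtain ⟨v, hv, hprod⟩ := h
  choose x hx using fun k => (hv k).2
  choose d hd y hy using fun k => exists_algebraMap_eq_mul (A := A) (x k)
  have hclear : ∏ k, eval c (y k) = f * (∏ k, d k) ^ 2 := by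
    refine IsFractionRing.injective A K ?_
    simp only [map_prod, map_mul, map_pow, eval_eq_sq_mul_of_map_eq_mul _ c (hy _), hx, hprod,
      Finset.prod_mul_distrib, Finset.prod_pow]
    ring
  refine prime_mul_sq_ne_multiset_prod hf (S := Set.range (eval c)) ?_
    (Finset.prod_ne_zero_iff.2 fun k _ => hd k) (Finset.univ.val.map fun k => eval c (y k))
    (by simp) (by rw [← Finset.prod_eq_multiset_prod, hclear])
  rintro _ ⟨y, rfl⟩ hdvd
  obtain ⟨y', hy'⟩ := exists_eval_eq_sq_mul_of_dvd hno hdvd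
  exact ⟨_, ⟨y', rfl⟩, hy'⟩

end Descent

section Polynomial

open Polynomial

variable {ι : Type} [Fintype ι]

def maxNatDegree (y : ι → R[X]) : ℕ := Finset.univ.sup fun i => (y i).natDegree

theorem natDegree_le_maxNatDegree (y : ι → R[X]) (i : ι) : (y i).natDegree ≤ maxNatDegree y :=
  Finset.le_sup (f := fun i => (y i).natDegree) (Finset.mem_univ i)

theorem eval_map_C_eq (c : ι → ι → R) (y : ι → R[X]) :
    eval (map C c) y = ∑ i, ∑ j, C (c i j) * (y i * y j) := by
  simp [eval, map, mul_assoc]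

theorem natDegree_eval_map_C_le (c : ι → ι → R) (y : ι → R[X]) :
    (eval (map C c) y).natDegree ≤ 2 * maxNatDegree y := by
  rw [eval_map_C_eq, two_mul]
  refine natDegree_sum_le_of_forall_le _ _ fun i _ => natDegree_sum_le_of_forall_le _ _ fun j _ =>
    (natDegree_C_mul_le _ _).trans (natDegree_mul_le_of_le ?_ ?_) <;>
  exact natDegree_le_maxNatDegree y _

theorem coeff_eval_map_C_two_mul_maxNatDegree (c : ι → ι → R) (y : ι → R[X]) :
    (eval (map C c) y).coeff (2 * maxNatDegree y) =
      eval c fun i => (y i).coeff (maxNatDegree y) := by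
  rw [eval_map_C_eq, eval, two_mul]
  simp only [finsetSum_coeff, coeff_C_mul, mul_assoc, coeff_mul_add_eq_of_natDegree_le
    (natDegree_le_maxNatDegree y _) (natDegree_le_maxNatDegree y _)]

theorem coeff_maxNatDegree_ne_zero {y : ι → R[X]} (hy : y ≠ 0) :
    (fun i => (y i).coeff (maxNatDegree y)) ≠ 0 := by
  intro h
  obtain ⟨i, hi⟩ := Function.ne_iff.mp hy
  obtain ⟨j, -, hj⟩ :=
    Finset.exists_mem_eq_sup Finset.univ ⟨i, Finset.mem_univ i⟩ fun i => (y i).natDegree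
  have hyj : y j = 0 := leadingCoeff_eq_zero.mp (by
    rw [leadingCoeff, ← hj]
    exact congrFun h j)
  have hD : maxNatDegree y = 0 := by rw [maxNatDegree, hj, hyj, natDegree_zero]
  refine hi (eq_C_of_natDegree_le_zero ((natDegree_le_maxNatDegree y i).trans hD.le) ▸ ?_)
  simpa [hD] using congrFun h i

variable {c : ι → ι → F} (han : ¬ IsIsotropic c) {y : ι → F[X]} (hy : y ≠ 0)
include han hy

theorem coeff_eval_map_C_two_mul_maxNatDegree_ne_zero :
    (eval (map C c) y).coeff (2 * maxNatDegree y) ≠ 0 := by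
  rw [coeff_eval_map_C_two_mul_maxNatDegree]
  exact fun h => han ⟨_, coeff_maxNatDegree_ne_zero hy, h⟩

theorem natDegree_eval_map_C : (eval (map C c) y).natDegree = 2 * maxNatDegree y :=
  (natDegree_eval_map_C_le c y).antisymm
    (le_natDegree_of_ne_zero (coeff_eval_map_C_two_mul_maxNatDegree_ne_zero han hy))

theorem leadingCoeff_eval_map_C_mem_reps : (eval (map C c) y).leadingCoeff ∈ reps c := by
  rw [leadingCoeff, natDegree_eval_map_C han hy]
  exact ⟨coeff_eval_map_C_two_mul_maxNatDegree_ne_zero han hy, _,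
    (coeff_eval_map_C_two_mul_maxNatDegree c y).symm⟩

theorem eval_map_C_ne_zero : eval (map C c) y ≠ 0 :=
  leadingCoeff_ne_zero.mp (leadingCoeff_eval_map_C_mem_reps han hy).1

end Polynomial

section ZeroMod

open Polynomial

variable {ι : Type} [Fintype ι]

theorem IsNontrivialZeroMod.ne_zero {c : ι → ι → R} {f : R} {z : ι → R}
    (hz : IsNontrivialZeroMod c f z) : z ≠ 0 := by
  rintro rfl
  obtain ⟨i, hi⟩ := hz.1
  exact hi (dvd_zero f)

theorem IsNontrivialZeroMod.of_smul {c : ι → ι → R} {f q : R} (hf : Prime f) (hfq : ¬ f ∣ q)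
    {z : ι → R} (hz : IsNontrivialZeroMod c f (q • z)) : IsNontrivialZeroMod c f z := by
  obtain ⟨⟨i, hi⟩, hdvd⟩ := hz
  refine ⟨⟨i, fun h => hi (dvd_mul_of_dvd_right h q)⟩, ?_⟩
  rw [eval_smul] at hdvd
  exact (hf.dvd_or_dvd hdvd).resolve_left fun h => hfq (hf.dvd_of_dvd_pow h)

theorem IsNontrivialZeroMod.modByMonic {c : ι → ι → R} {f : R[X]} {z : ι → R[X]}
    (hz : IsNontrivialZeroMod (map C c) f z) :
    IsNontrivialZeroMod (map C c) f fun i => z i %ₘ f := by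
  have hsub : ∀ i, f ∣ z i - z i %ₘ f := fun i =>
    ⟨z i /ₘ f, by rw [sub_eq_iff_eq_add', modByMonic_add_div]⟩
  obtain ⟨⟨i, hi⟩, hdvd⟩ := hz
  refine ⟨⟨i, fun h => hi (by simpa using dvd_add (hsub i) h)⟩, ?_⟩
  simpa using dvd_sub hdvd (dvd_eval_sub_eval (map C c) hsub)

theorem exists_isNontrivialZeroMod_minimal {c : ι → ι → R[X]} {f : R[X]}
    (h : ∃ z, IsNontrivialZeroMod c f z) :
    ∃ z, IsNontrivialZeroMod c f z ∧
      ∀ z', IsNontrivialZeroMod c f z' → (eval c z).natDegree ≤ (eval c z').natDegree := by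
  obtain ⟨z, hz, hmin⟩ := (measure fun z => (eval c z).natDegree).wf.has_min _ h
  exact ⟨z, hz, fun z' hz' => not_lt.mp (hmin z' hz')⟩

end ZeroMod

section RepsPowNatDegree

open Polynomial

variable {ι : Type} [Fintype ι]

/-- `p ∈ D^*_{F(X)}(φ)^m` for some `m ≤ deg p`. -/
def MemRepsPowNatDegree (c : ι → ι → F) (p : F[X]) : Prop :=
  ∃ m ≤ p.natDegree, algebraMap F[X] (FractionRing F[X]) p ∈ repsPow (map (ratHom1 F) c) m

theorem MemRepsPowNatDegree.ne_zero {c : ι → ι → F} {p : F[X]} (hp : MemRepsPowNatDegree c p) :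
    p ≠ 0 := by
  obtain ⟨m, -, hm⟩ := hp
  rintro rfl
  exact ne_zero_of_mem_repsPow hm (map_zero _)

theorem MemRepsPowNatDegree.mul {c : ι → ι → F} {p q : F[X]} (hp : MemRepsPowNatDegree c p)
    (hq : MemRepsPowNatDegree c q) : MemRepsPowNatDegree c (p * q) := by
  obtain ⟨m, hm, hpm⟩ := id hp
  obtain ⟨n, hn, hqn⟩ := id hq
  refine ⟨m + n, ?_, by simpa only [map_mul] using mul_mem_repsPow_add hpm hqn⟩
  rw [natDegree_mul hp.ne_zero hq.ne_zero]
  omega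

theorem memRepsPowNatDegree_multiset_prod (c : ι → ι → F) {s : Multiset F[X]}
    (hs : ∀ q ∈ s, MemRepsPowNatDegree c q) : MemRepsPowNatDegree c s.prod := by
  induction s using Multiset.induction with
  | empty => exact ⟨0, Nat.zero_le _, Fin.elim0, fun k => k.elim0, by simp⟩
  | cons q s ih =>
    rw [Multiset.prod_cons]
    exact (hs q (Multiset.mem_cons_self q s)).mul
      (ih fun r hr => hs r (Multiset.mem_cons_of_mem hr))

open UniqueFactorizationMonoid in
theorem memRepsPowNatDegree_of_monic {c : ι → ι → F} {p : F[X]} (hp : p.Monic)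
    (h : ∀ q, q.Monic → Irreducible q → q ∣ p → MemRepsPowNatDegree c q) :
    MemRepsPowNatDegree c p := by
  have hfac : ∀ q ∈ normalizedFactors p, q.Monic ∧ Irreducible q := fun q hq => by
    have hirr := irreducible_of_normalized_factor q hq
    exact ⟨normalize_normalized_factor q hq ▸ monic_normalize hirr.ne_zero, hirr⟩
  have hprod : (normalizedFactors p).prod = p := by
    refine eq_of_monic_of_associated ?_ hp (prod_normalizedFactors hp.ne_zero)
    simpa using monic_multiset_prod_of_monic _ id fun q hq => (hfac q hq).1
  rw [← hprod]
  exact memRepsPowNatDegree_multiset_prod c fun q hq =>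
    h q (hfac q hq).1 (hfac q hq).2 (dvd_of_mem_normalizedFactors hq)

theorem memRepsPowNatDegree_of_eval_eq_mul {c : ι → ι → F} {f g : F[X]} {z : ι → F[X]}
    (hz : eval (map C c) z = f * g) (hdeg : g.natDegree + 2 ≤ f.natDegree)
    (hlc : g.leadingCoeff ∈ reps c) (hg : MemRepsPowNatDegree c (g * C g.leadingCoeff⁻¹)) :
    MemRepsPowNatDegree c f := by
  have hb := hlc.1
  have hz0 : eval (map C c) z ≠ 0 := by
    rw [hz]
    exact mul_ne_zero (ne_zero_of_natDegree_gt (by omega : 0 < f.natDegree))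
      (leadingCoeff_ne_zero.mp hb)
  obtain ⟨m, hm, hgm⟩ := hg
  rw [natDegree_mul_C (inv_ne_zero hb)] at hm
  refine ⟨1 + (m + 1), by omega, mem_repsPow_succ_of_mul_mem_reps ?_
    (mul_mem_repsPow_add hgm (mem_repsPow_one (map_mem_reps_map (ratHom1 F) hlc)))⟩
  have hK : algebraMap F[X] (FractionRing F[X]) f *
      (algebraMap F[X] _ (g * C g.leadingCoeff⁻¹) * ratHom1 F g.leadingCoeff) =
      algebraMap F[X] _ (eval (map C c) z) := by
    simp only [ratHom1, RingHom.comp_apply, ← map_mul]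
    rw [hz, mul_assoc g, ← C_mul, inv_mul_cancel₀ hb, C_1, mul_one]
  rw [hK]
  exact ⟨(map_ne_zero_iff _ (IsFractionRing.injective _ _)).2 hz0, _,
    eval_map_comp (algebraMap F[X] (FractionRing F[X])) (map C c) z⟩

end RepsPowNatDegree

section Anisotropic

open Polynomial

variable {ι : Type} [Fintype ι] {c : ι → ι → F} (han : ¬ IsIsotropic c)
include han

theorem maxNatDegree_lt_of_minimal {f : F[X]} (hf : f.Monic) (hdeg : 0 < f.natDegree)
    {z : ι → F[X]} (hz : IsNontrivialZeroMod (map C c) f z)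
    (hmin : ∀ z', IsNontrivialZeroMod (map C c) f z' →
      (eval (map C c) z).natDegree ≤ (eval (map C c) z').natDegree) :
    maxNatDegree z < f.natDegree := by
  by_contra! hle
  have hz' := hz.modByMonic
  have hlt : maxNatDegree (fun i => z i %ₘ f) < f.natDegree :=
    (Finset.sup_lt_iff hdeg).2 fun i _ => natDegree_modByMonic_lt _ hf (by rintro rfl; simp at hdeg)
  have := hmin _ hz'
  rw [natDegree_eval_map_C han hz.ne_zero, natDegree_eval_map_C han hz'.ne_zero] at this
  omega

theorem exists_not_dvd_of_minimal {f : F[X]} (hf : Prime f) {z : ι → F[X]}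
    (hz : IsNontrivialZeroMod (map C c) f z)
    (hmin : ∀ z', IsNontrivialZeroMod (map C c) f z' →
      (eval (map C c) z).natDegree ≤ (eval (map C c) z').natDegree)
    {q : F[X]} (hq : 0 < q.natDegree) (hfq : ¬ f ∣ q) : ∃ i, ¬ q ∣ z i := by
  by_contra! hdvd
  choose z₁ hz₁ using hdvd
  obtain rfl : z = q • z₁ := funext fun i => by simp [hz₁ i]
  have hz₁' := hz.of_smul hf hfq
  have := hmin _ hz₁'
  rw [eval_smul, natDegree_mul (pow_ne_zero 2 (ne_zero_of_natDegree_gt hq))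
    (eval_map_C_ne_zero han hz₁'.ne_zero), natDegree_pow] at this
  omega

theorem memRepsPowNatDegree_of_isNontrivialZeroMod {f : F[X]} (hf : f.Monic)
    (hirr : Irreducible f) (h : ∃ z, IsNontrivialZeroMod (map C c) f z) :
    MemRepsPowNatDegree c f := by
  induction hn : f.natDegree using Nat.strong_induction_on generalizing f with
  | _ n ih =>
  obtain ⟨z, hz, hmin⟩ := exists_isNontrivialZeroMod_minimal h
  obtain ⟨g, hg⟩ := hz.2
  have hz0 := eval_map_C_ne_zero han hz.ne_zero
  have hg0 : g ≠ 0 := by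
    rintro rfl
    exact hz0 (by rw [hg, mul_zero])
  have hdeg : g.natDegree + 2 ≤ f.natDegree := by
    have h1 := natDegree_eval_map_C han hz.ne_zero
    have h2 := maxNatDegree_lt_of_minimal han hf hirr.natDegree_pos hz hmin
    rw [hg, natDegree_mul hirr.ne_zero hg0] at h1
    omega
  have hb : g.leadingCoeff ≠ 0 := leadingCoeff_ne_zero.2 hg0
  have hmem : MemRepsPowNatDegree c (g * C g.leadingCoeff⁻¹) :=
    memRepsPowNatDegree_of_monic (monic_mul_leadingCoeff_inv hg0) fun q hqm hqi hqd => by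
      have hqg : q ∣ g := hqd.trans
        (associated_mul_unit_left g _ (isUnit_C.2 (inv_ne_zero hb).isUnit)).dvd
      have hqdeg := natDegree_le_of_dvd hqg hg0
      have hfq : ¬ f ∣ q := fun hfq => by
        have := natDegree_le_of_dvd hfq hqm.ne_zero
        omega
      exact ih _ (by omega) hqm hqi
        ⟨z, exists_not_dvd_of_minimal han hirr.prime hz hmin hqi.natDegree_pos hfq,
          hg ▸ dvd_mul_of_dvd_right hqg f⟩ rfl
  have hlc : g.leadingCoeff ∈ reps c := by
    simpa [hg, hf.leadingCoeff] using leadingCoeff_eval_map_C_mem_reps han hz.ne_zero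
  exact memRepsPowNatDegree_of_eval_eq_mul hg hdeg hlc hmem

end Anisotropic

theorem stmt8_general {F : Type u} [Field F] {ι : Type} [Fintype ι]
    (c : ι → ι → F) (hnd : IsNondefective c)
    (f : Polynomial F) (hmonic : f.Monic) (hirr : Irreducible f) :
    (∃ m ≤ f.natDegree,
        algebraMap (Polynomial F) (FractionRing (Polynomial F)) f
          ∈ repsPow (map (ratHom1 F) c) m) ↔
      IsIsotropic (map (ffHom Polynomial.C f) c) := by
  rw [isIsotropic_map_ffHom_iff _ hirr.prime]
  constructor
  · rintro ⟨m, -, hm⟩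
    exact exists_isNontrivialZeroMod_of_mem_repsPow (c := map Polynomial.C c) hirr.prime hm
  · intro hzero
    by_cases hiso : IsIsotropic c
    · have hf0 := (map_ne_zero_iff _
        (IsFractionRing.injective (Polynomial F) (FractionRing (Polynomial F)))).2 hirr.ne_zero
      exact ⟨1, hirr.natDegree_pos, mem_repsPow_one (mem_reps_map_of_isIsotropic hnd hiso _ hf0)⟩
    · exact memRepsPowNatDegree_of_isNontrivialZeroMod hiso hmonic hirr hzero

/-- Let `F` be a field of characteristic 2, `φ` a nondefective
quadratic form over `F` with `1 ∈ D_F^*(φ)`, and `f ∈ F[X]` a monic irreducible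
polynomial in one variable.  Then `f ∈ D^*_{F(X)}(φ)^m` for some `m ≤ deg f` if and
only if `φ_{F(f)}` is isotropic. -/
theorem stmt8 {F : Type u} [Field F] [CharP F 2] {ι : Type} [Fintype ι]
    (c : ι → ι → F) (hnd : IsNondefective c) (hone : (1 : F) ∈ reps c)
    (f : Polynomial F) (hmonic : f.Monic) (hirr : Irreducible f) :
    (∃ m ≤ f.natDegree,
        algebraMap (Polynomial F) (FractionRing (Polynomial F)) f
          ∈ repsPow (map (ratHom1 F) c) m) ↔
      IsIsotropic (map (ffHom Polynomial.C f) c) :=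
  stmt8_general c hnd f hmonic hirr

end QF2
end
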